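/- arXiv:math/9912053 — 6 statements merged into one kernel-verified Lean document; each statement's English description precedes it below -/
import Mathlib

section
/- For nonnegative integers n and k, the q-binomial coefficient [n choose k]_q evaluated at q = -1 equals 0 if n is even and k is odd, and equals binomial(floor(n/2), floor(k/2)) otherwise. -/
/-!
At `q = -1` the `q`-Pascal rule reads `[n+1, k+1] = [n, k] + (-1)^(k+1) [n, k+1]`. Going from
the even row `2m` to the odd row `2m+1`, in every column one of the two terms vanishes and the
other is `C(m, ⌊k/2⌋)`; going from row `2m+1` to row `2m+2`, the two terms cancel in odd columns
and add up to `C(m+1, k/2)` by Pascal's rule in even ones.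
-/

/-- The Gaussian binomial coefficient as a polynomial in `q`, defined by the
`q`-Pascal recurrence `[n+1, k+1] = [n, k] + q^(k+1) [n, k+1]`. -/
noncomputable def qbinom : ℕ → ℕ → Polynomial ℤ
  | _, 0 => 1
  | 0, _ + 1 => 0
  | n + 1, k + 1 => qbinom n k + Polynomial.X ^ (k + 1) * qbinom n (k + 1)

open Polynomial

theorem qbinom_zero_right (n : ℕ) : qbinom n 0 = 1 := by
  cases n <;> rfl

theorem Nat.two_mul_add_one_div_two (j : ℕ) : (2 * j + 1) / 2 = j := by
  omega

theorem eval_qbinom_succ_succ (x : ℤ) (n k : ℕ) :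
    (qbinom (n + 1) (k + 1)).eval x =
      (qbinom n k).eval x + x ^ (k + 1) * (qbinom n (k + 1)).eval x := by
  simp [qbinom]

theorem eval_neg_one_qbinom_odd_row {m : ℕ}
    (h : ∀ k, (qbinom (2 * m) k).eval (-1) = if Odd k then 0 else (m.choose (k / 2) : ℤ))
    (k : ℕ) : (qbinom (2 * m + 1) k).eval (-1) = m.choose (k / 2) := by
  obtain _ | k := k
  · simp [qbinom_zero_right]
  obtain ⟨j, rfl | rfl⟩ := Nat.even_or_odd' k
  · rw [eval_qbinom_succ_succ, h, h]
    simp [pow_succ, pow_mul, Nat.two_mul_add_one_div_two]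
  · rw [eval_qbinom_succ_succ, h, h, show 2 * j + 1 + 1 = 2 * (j + 1) by ring]
    simp [pow_succ, pow_mul]

theorem eval_neg_one_qbinom_even_row (m k : ℕ) :
    (qbinom (2 * m) k).eval (-1) = if Odd k then 0 else (m.choose (k / 2) : ℤ) := by
  induction m generalizing k with
  | zero =>
    obtain _ | k := k
    · simp [qbinom_zero_right]
    · rw [Nat.mul_zero, qbinom, eval_zero]
      split_ifs with hk
      · rfl
      · rw [Nat.choose_eq_zero_of_lt (by grind), Nat.cast_zero]
  | succ m ih =>
    obtain _ | k := k
    · simp [qbinom_zero_right]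
    have hodd := eval_neg_one_qbinom_odd_row ih
    rw [Nat.mul_succ, eval_qbinom_succ_succ, hodd, hodd]
    obtain ⟨j, rfl | rfl⟩ := Nat.even_or_odd' k
    · simp [pow_succ, pow_mul, Nat.two_mul_add_one_div_two]
    · rw [show 2 * j + 1 + 1 = 2 * (j + 1) by ring]
      simp [pow_succ, pow_mul, Nat.two_mul_add_one_div_two, Nat.choose_succ_succ']

theorem stmt2 (n k : ℕ) :
    (qbinom n k).eval (-1) =
      if Even n ∧ Odd k then 0 else (Nat.choose (n / 2) (k / 2) : ℤ) := by
  obtain ⟨m, rfl | rfl⟩ := Nat.even_or_odd' n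
  · simp [eval_neg_one_qbinom_even_row]
  · simp [eval_neg_one_qbinom_odd_row (eval_neg_one_qbinom_even_row m),
      Nat.two_mul_add_one_div_two]
end

section
/- The determinant of the n×n matrix with (i,j)-entry binomial(A, L_j - i) for 1 ≤ i,j ≤ n equals [∏_{1≤i<j≤n} (L_j - L_i)] · [∏_{i=1}^{n} (A+i-1)!] / ([∏_{i=1}^{n} (A - L_i + n)!] · [∏_{i=1}^{n} (L_i - 1)!]). -/
/-!
Up to the column factor `(L_j - 1)! (A + n - L_j)! / A!`, the entry in row `i` (counted from
`0`) and column `j` is the value at `x = L_j` of the polynomial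
`q_i(x) = (x - 1) ⋯ (x - i) · (A + n - x) ⋯ (A + i + 2 - x)` of degree `n - 1`.
Hence the determinant factors as the determinant of the coefficients of the `q_i` times the
Vandermonde determinant of the `L_j`. The coefficient determinant does not depend on `L`, and is
read off from `L_j = j + 1`, where the binomial matrix is unitriangular.
-/

open Polynomial Finset Matrix
open scoped Nat

theorem Finset.prod_prod_Ioi_eq_prod_prod_Iio {α M : Type*} [CommMonoid M] [LinearOrder α]
    [Fintype α] [LocallyFiniteOrderTop α] [LocallyFiniteOrderBot α] (f : α → α → M) :
    ∏ i, ∏ j ∈ Ioi i, f i j = ∏ j, ∏ i ∈ Iio j, f i j :=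
  prod_comm' fun i j => by simp

namespace Matrix

variable {R : Type*} [CommRing R] {n : ℕ}

theorem det_of_eval_eq_det_of_coeff_mul_det_vandermonde (p : Fin n → R[X])
    (hp : ∀ i, (p i).natDegree < n) (v : Fin n → R) :
    (of fun i j => (p i).eval (v j)).det =
      (of fun i k : Fin n => (p i).coeff k).det * (vandermonde v).det := by
  rw [← det_transpose (vandermonde v), ← det_mul]
  congr 1
  ext i j
  simp only [mul_apply, of_apply, transpose_apply, vandermonde_apply]
  rw [eval_eq_sum_range' (hp i), ← Fin.sum_univ_eq_sum_range]

theorem det_of_eval_mul_det_vandermonde_comm (p : Fin n → R[X])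
    (hp : ∀ i, (p i).natDegree < n) (v w : Fin n → R) :
    (of fun i j => (p i).eval (v j)).det * (vandermonde w).det =
      (of fun i j => (p i).eval (w j)).det * (vandermonde v).det := by
  rw [det_of_eval_eq_det_of_coeff_mul_det_vandermonde p hp,
    det_of_eval_eq_det_of_coeff_mul_det_vandermonde p hp]
  ring

theorem det_vandermonde_natCast_succ :
    (vandermonde fun j : Fin n => ((j + 1 : ℕ) : R)).det = ∏ j : Fin n, (j ! : R) := by
  cases n with
  | zero => simp
  | succ m =>
    push_cast
    rw [det_vandermonde_add, det_vandermonde_id_eq_superFactorial, ← Nat.prod_range_succ_factorial,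
      Fin.prod_univ_eq_prod_range (fun j => (j ! : R)), Nat.cast_prod]

end Matrix

theorem Nat.descFactorial_mul_descFactorial_mul_factorial {a b i j m : ℕ}
    (hab : a + b = m + i + j) (hi : i ≤ a) :
    a.descFactorial i * b.descFactorial j * m ! = m.choose (a - i) * a ! * b ! := by
  rcases lt_or_ge b j with hb | hb
  · rw [Nat.descFactorial_eq_zero_iff_lt.2 hb, Nat.choose_eq_zero_of_lt (by omega)]
    simp
  · rw [← Nat.factorial_mul_descFactorial hi, ← Nat.factorial_mul_descFactorial hb,
      ← Nat.choose_mul_factorial_mul_factorial (show a - i ≤ m by omega),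
      show m - (a - i) = b - j by omega]
    ring

noncomputable def choosePoly (n A i : ℕ) : ℚ[X] :=
  (descPochhammer ℚ i).comp (X - 1) * (descPochhammer ℚ (n - 1 - i)).comp (C ((A + n : ℕ) : ℚ) - X)

theorem natDegree_choosePoly_lt {n i : ℕ} (A : ℕ) (hi : i < n) :
    (choosePoly n A i).natDegree < n := by
  have h₁ : (X - 1 : ℚ[X]).natDegree = 1 := by simpa using natDegree_X_sub_C (1 : ℚ)
  have h₂ : (C ((A + n : ℕ) : ℚ) - X).natDegree = 1 := by
    rw [← neg_sub, natDegree_neg, natDegree_X_sub_C]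
  refine (natDegree_mul_le.trans (le_of_eq ?_)).trans_lt (show i + (n - 1 - i) < n by omega)
  rw [natDegree_comp, natDegree_comp, h₁, h₂, descPochhammer_natDegree, descPochhammer_natDegree,
    mul_one, mul_one]

theorem eval_choosePoly {n A x : ℕ} (i : ℕ) (hx₁ : 1 ≤ x) (hx₂ : x ≤ A + n) :
    (choosePoly n A i).eval (x : ℚ) =
      ((x - 1).descFactorial i * (A + n - x).descFactorial (n - 1 - i) : ℕ) := by
  rw [choosePoly, eval_mul, eval_comp, eval_comp]
  simp only [eval_sub, eval_X, eval_one, eval_C]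
  rw [← Nat.cast_one, ← Nat.cast_sub hx₁, ← Nat.cast_sub hx₂, descPochhammer_eval_eq_descFactorial,
    descPochhammer_eval_eq_descFactorial, Nat.cast_mul]

theorem factorial_mul_eval_choosePoly {n A x i : ℕ} (hi : i < n) (hx₁ : 1 ≤ x) (hx₂ : x ≤ A + n) :
    (A ! : ℚ) * (choosePoly n A i).eval (x : ℚ) =
      ((x - 1)! * (A + n - x)! : ℚ) *
        if i + 1 ≤ x then (A.choose (x - (i + 1)) : ℚ) else 0 := by
  rw [eval_choosePoly i hx₁ hx₂]
  split_ifs with h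
  · have key := Nat.descFactorial_mul_descFactorial_mul_factorial
      (a := x - 1) (b := A + n - x) (i := i) (j := n - 1 - i) (m := A) (by omega) (by omega)
    rw [show x - 1 - i = x - (i + 1) by omega] at key
    rw [mul_comm, mul_comm _ (A.choose _ : ℚ), ← mul_assoc]
    exact_mod_cast key
  · rw [Nat.descFactorial_eq_zero_iff_lt.2 (by omega)]
    simp

variable {n : ℕ}

/-- The `if` is `binomial(A, r) = 0` for `r < 0`, which truncated subtraction would miss. -/
def chooseMatrix (A : ℕ) (L : Fin n → ℕ) : Matrix (Fin n) (Fin n) ℚ :=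
  of fun i j => if i.val + 1 ≤ L j then (Nat.choose A (L j - (i.val + 1)) : ℚ) else 0

theorem det_chooseMatrix_mul_prod_factorial (A : ℕ) (L : Fin n → ℕ) (hL₁ : ∀ j, 1 ≤ L j)
    (hL₂ : ∀ j, L j ≤ A + n) :
    (chooseMatrix A L).det * ∏ j, ((L j - 1)! * (A + n - L j)! : ℚ) =
      (A ! : ℚ) ^ n * (of fun i j : Fin n => (choosePoly n A i).eval (L j : ℚ)).det := by
  rw [mul_comm, ← det_mul_row, ← Fin.prod_const, ← det_mul_column]
  congr 1
  ext i j
  simp only [of_apply, chooseMatrix, factorial_mul_eval_choosePoly i.isLt (hL₁ j) (hL₂ j)]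

theorem det_chooseMatrix_succ (A : ℕ) : (chooseMatrix A fun j : Fin n => j.val + 1).det = 1 := by
  rw [det_of_isUpperTriangular]
  · exact prod_eq_one fun i _ => by simp [chooseMatrix]
  · intro i j (hij : j < i)
    rw [Fin.lt_def] at hij
    simp only [chooseMatrix, of_apply]
    rw [if_neg (by omega)]

theorem prod_factorial_rev (A : ℕ) :
    ∏ j : Fin n, ((A + n - (j.val + 1))! : ℚ) = ∏ j : Fin n, ((A + j.val)! : ℚ) :=
  Fintype.prod_equiv Fin.revPerm _ _ fun j => by
    simp only [Fin.revPerm_apply, Fin.val_rev]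
    congr 3
    omega

theorem stmt3 (n A : ℕ) (L : Fin n → ℕ) (hL1 : ∀ i, 1 ≤ L i) (hL2 : ∀ i, L i ≤ A + 1) :
    Matrix.det (Matrix.of fun i j : Fin n =>
        if i.val + 1 ≤ L j then (Nat.choose A (L j - (i.val + 1)) : ℚ) else 0) =
      (∏ j : Fin n, ∏ i ∈ Finset.Iio j, ((L j : ℚ) - (L i : ℚ))) *
          (∏ i : Fin n, (Nat.factorial (A + i.val) : ℚ)) /
        ((∏ i : Fin n, (Nat.factorial (A + n - L i) : ℚ)) *
          ∏ i : Fin n, (Nat.factorial (L i - 1) : ℚ)) := by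
  have hL := det_chooseMatrix_mul_prod_factorial A L hL1 fun j =>
    (hL2 j).trans (by have := j.isLt; omega)
  have hsucc := det_chooseMatrix_mul_prod_factorial A (fun j : Fin n => j.val + 1)
    (fun _ => by omega) fun j => by omega
  have hcomm := det_of_eval_mul_det_vandermonde_comm (fun i : Fin n => choosePoly n A i)
    (fun i => natDegree_choosePoly_lt A i.isLt) (fun j => (L j : ℚ))
    fun j => ((j.val + 1 : ℕ) : ℚ)
  rw [det_chooseMatrix_succ, one_mul, prod_mul_distrib, prod_factorial_rev] at hsucc
  simp only [Nat.add_sub_cancel] at hsucc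
  rw [det_vandermonde_natCast_succ, det_vandermonde, prod_prod_Ioi_eq_prod_prod_Iio] at hcomm
  rw [prod_mul_distrib] at hL
  have hS : ∏ j : Fin n, (j.val ! : ℚ) ≠ 0 := by positivity
  rw [eq_div_iff (by positivity)]
  apply mul_right_cancel₀ hS
  change (chooseMatrix A L).det * _ * _ = _
  linear_combination (∏ j : Fin n, (j.val ! : ℚ)) * hL + (A ! : ℚ) ^ n * hcomm -
    (∏ j : Fin n, ∏ i ∈ Iio j, ((L j : ℚ) - L i)) * hsucc
end

section
/- For nonnegative integers n and parameters x, y, the determinant of the n×n matrix with (i,j)-entry (x+y+i+j-1)! / ((x+2i-j)! · (y+2j-i)!) for 0 ≤ i,j ≤ n-1 equals ∏_{i=0}^{n-1} [ i! (x+y+i-1)! (2x+y+2i)_i (x+2y+2i)_i ] / [ (x+2i)! (y+2i)! ], where (α)_k denotes the rising factorial. -/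
/-- The rising factorial (Pochhammer symbol) `(x)_k = x (x+1) ⋯ (x+k-1)`. -/
def asc (x : ℚ) (k : ℕ) : ℚ := ∏ i ∈ Finset.range k, (x + i)

/-- matrix entry -/
def ent (x y i j : ℕ) : ℚ :=
  if j ≤ x + 2 * i ∧ i ≤ y + 2 * j then
    (Nat.factorial (x + y + i + j - 1) : ℚ) /
      ((Nat.factorial (x + 2 * i - j) : ℚ) * (Nat.factorial (y + 2 * j - i) : ℚ))
  else 0

def Dm (n x y : ℕ) : Matrix (Fin n) (Fin n) ℚ := Matrix.of fun i j => ent x y i.val j.val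

/-- term of the product formula -/
def term (x y i : ℕ) : ℚ :=
  (Nat.factorial i : ℚ) * (Nat.factorial (x + y + i - 1) : ℚ) *
      asc ((2 * x + y + 2 * i : ℕ) : ℚ) i * asc ((x + 2 * y + 2 * i : ℕ) : ℚ) i /
    ((Nat.factorial (x + 2 * i) : ℚ) * (Nat.factorial (y + 2 * i) : ℚ))

def Fp (n x y : ℕ) : ℚ := ∏ i ∈ Finset.range n, term x y i

lemma Fp_succ (n x y : ℕ) : Fp (n + 1) x y = Fp n x y * term x y n :=
  Finset.prod_range_succ _ _

lemma asc_pos {c : ℕ} (k : ℕ) (hc : 1 ≤ c) : 0 < asc (c : ℚ) k := by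
  refine Finset.prod_pos fun i _ => ?_
  have : (1 : ℚ) ≤ (c : ℚ) := by exact_mod_cast hc
  positivity

lemma fact_pos_q (n : ℕ) : (0 : ℚ) < (Nat.factorial n : ℚ) := by
  exact_mod_cast Nat.factorial_pos n

lemma term_pos {x y : ℕ} (i : ℕ) (h : 1 ≤ x + y) : 0 < term x y i := by
  unfold term
  have h1 : 0 < asc ((2 * x + y + 2 * i : ℕ) : ℚ) i := asc_pos i (by omega)
  have h2 : 0 < asc ((x + 2 * y + 2 * i : ℕ) : ℚ) i := asc_pos i (by omega)
  have := fact_pos_q i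
  have := fact_pos_q (x + y + i - 1)
  have := fact_pos_q (x + 2 * i)
  have := fact_pos_q (y + 2 * i)
  positivity

lemma Fp_pos {x y : ℕ} (n : ℕ) (h : 1 ≤ x + y) : 0 < Fp n x y :=
  Finset.prod_pos fun i _ => term_pos i h

lemma asc_zero (q : ℚ) : asc q 0 = 1 := by simp [asc]

lemma asc_succ_left (q : ℚ) (k : ℕ) : asc q (k + 1) = q * asc (q + 1) k := by
  rw [asc, Finset.prod_range_succ', asc]
  push_cast
  simp only [add_zero]
  rw [mul_comm]
  exact congrArg _ (Finset.prod_congr rfl fun i _ => by ring)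

lemma entdiv_congr {a b c a' b' c' : ℕ} (h1 : a = a') (h2 : b = b') (h3 : c = c') :
    (Nat.factorial a : ℚ) / ((Nat.factorial b : ℚ) * (Nat.factorial c : ℚ)) =
    (Nat.factorial a' : ℚ) / ((Nat.factorial b' : ℚ) * (Nat.factorial c' : ℚ)) := by
  subst h1 h2 h3; rfl

lemma entdiv_congr' {a b c a' b' c' : ℕ} (h1 : a = a') (h2 : b = b') (h3 : c = c') :
    (Nat.factorial a : ℚ) / ((Nat.factorial b : ℚ) * (Nat.factorial c : ℚ)) =
    (Nat.factorial a' : ℚ) / ((Nat.factorial c' : ℚ) * (Nat.factorial b' : ℚ)) := by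
  subst h1 h2 h3; rw [mul_comm]

lemma fact_succ_q (n : ℕ) : ((Nat.factorial (n + 1) : ℚ)) = (n + 1) * (Nat.factorial n : ℚ) := by
  rw [Nat.factorial_succ]; push_cast; ring

section DJ
variable {m : ℕ}

/-- equivalence for the (m+2) splitting: inner block + two corners -/
def eqE (m : ℕ) : (Fin m ⊕ Fin 2) ≃ Fin (m+2) where
  toFun := Sum.elim (fun i => i.castSucc.succ) ![0, Fin.last (m+1)]
  invFun := Fin.cases (Sum.inr 0) (Fin.lastCases (Sum.inr 1) (fun i => Sum.inl i))
  left_inv := by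
    rintro (i | c)
    · simp [← Fin.succ_castSucc]
    · fin_cases c
      · simp
      · simp [← Fin.succ_last]
  right_inv := by
    intro k
    induction k using Fin.cases with
    | zero => simp
    | succ j =>
      induction j using Fin.lastCases with
      | last => simp [← Fin.succ_last]
      | cast i => simp [← Fin.succ_castSucc]

@[simp] lemma eqE_apply_inl (i : Fin m) : eqE m (Sum.inl i) = i.castSucc.succ := rfl
@[simp] lemma eqE_apply_inr (c : Fin 2) : eqE m (Sum.inr c) = ![0, Fin.last (m+1)] c := rfl

/-- equivalence Fin m ⊕ Fin 1 ≃ Fin (m+1), corner last -/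
def eqL (m : ℕ) : (Fin m ⊕ Fin 1) ≃ Fin (m+1) where
  toFun := Sum.elim Fin.castSucc (fun _ => Fin.last m)
  invFun := Fin.lastCases (Sum.inr 0) (fun i => Sum.inl i)
  left_inv := by
    rintro (i | c)
    · simp
    · rw [Subsingleton.elim c 0]; simp
  right_inv := by
    intro k
    induction k using Fin.lastCases with
    | last => simp
    | cast i => simp

/-- equivalence Fin m ⊕ Fin 1 ≃ Fin (m+1), corner first -/
def eqR (m : ℕ) : (Fin m ⊕ Fin 1) ≃ Fin (m+1) where
  toFun := Sum.elim Fin.succ (fun _ => 0)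
  invFun := Fin.cases (Sum.inr 0) (fun i => Sum.inl i)
  left_inv := by
    rintro (i | c)
    · simp
    · rw [Subsingleton.elim c 0]; simp
  right_inv := by
    intro k
    induction k using Fin.cases with
    | zero => simp
    | succ i => simp

@[simp] lemma eqL_apply_inl (i : Fin m) : eqL m (Sum.inl i) = i.castSucc := rfl
@[simp] lemma eqL_apply_inr (c : Fin 1) : eqL m (Sum.inr c) = Fin.last m := rfl
@[simp] lemma eqR_apply_inl (i : Fin m) : eqR m (Sum.inl i) = i.succ := rfl
@[simp] lemma eqR_apply_inr (c : Fin 1) : eqR m (Sum.inr c) = 0 := rfl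

open Matrix in
theorem dodgson (M : Matrix (Fin (m+2)) (Fin (m+2)) ℚ)
    (h : (M.submatrix (fun i : Fin m => i.castSucc.succ) (fun i : Fin m => i.castSucc.succ)).det ≠ 0) :
    M.det * (M.submatrix (fun i : Fin m => i.castSucc.succ) (fun i : Fin m => i.castSucc.succ)).det =
      (M.submatrix Fin.succ Fin.succ).det * (M.submatrix Fin.castSucc Fin.castSucc).det -
      (M.submatrix Fin.succ Fin.castSucc).det * (M.submatrix Fin.castSucc Fin.succ).det := by
  classical
  set inn : Fin m → Fin (m+2) := fun i => i.castSucc.succ with hinn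
  set cor : Fin 2 → Fin (m+2) := ![0, Fin.last (m+1)] with hcor
  set A : Matrix (Fin m) (Fin m) ℚ := M.submatrix inn inn with hA
  set B : Matrix (Fin m) (Fin 2) ℚ := M.submatrix inn cor with hB
  set C : Matrix (Fin 2) (Fin m) ℚ := M.submatrix cor inn with hC
  set Dd : Matrix (Fin 2) (Fin 2) ℚ := M.submatrix cor cor with hDd
  have hAdet : IsUnit A.det := isUnit_iff_ne_zero.2 h
  have : Invertible A := A.invertibleOfIsUnitDet hAdet
  set W : Matrix (Fin 2) (Fin 2) ℚ := Dd - C * ⅟A * B with hW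
  -- determinant of M
  have hM : M.det = A.det * W.det := by
    have h1 : M.submatrix (eqE m) (eqE m) = fromBlocks A B C Dd := by
      ext (i | c) (j | d) <;> rfl
    rw [← det_submatrix_equiv_self (eqE m) M, h1, det_fromBlocks₁₁]
  -- generic 1×1 Schur entry
  have schurEntry : ∀ (r c : Fin 2),
      (fromBlocks A (B.submatrix id (fun _ : Fin 1 => c)) (C.submatrix (fun _ : Fin 1 => r) id)
        (Dd.submatrix (fun _ : Fin 1 => r) (fun _ : Fin 1 => c))).det = A.det * W r c := by
    intro r c
    rw [det_fromBlocks₁₁]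
    congr 1
    rw [det_fin_one]
    simp [hW, Matrix.mul_apply, Matrix.sub_apply, Finset.mul_sum, Finset.sum_mul]
  -- corner minors
  have h00 : (M.submatrix Fin.succ Fin.succ).det = A.det * W 1 1 := by
    rw [← schurEntry 1 1, ← det_submatrix_equiv_self (eqL m)]
    congr 1
    ext (i | c) (j | d) <;>
      simp [hA, hB, hC, hDd, hinn, hcor, Matrix.fromBlocks, Fin.succ_castSucc, Fin.succ_last, -Fin.castSucc_succ] <;> rfl
  have h11 : (M.submatrix Fin.castSucc Fin.castSucc).det = A.det * W 0 0 := by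
    rw [← schurEntry 0 0, ← det_submatrix_equiv_self (eqR m)]
    congr 1
    ext (i | c) (j | d) <;>
      simp [hA, hB, hC, hDd, hinn, hcor, Matrix.fromBlocks, Fin.succ_castSucc, Fin.succ_last, -Fin.castSucc_succ] <;> rfl
  -- mixed minors
  set σ : Equiv.Perm (Fin m ⊕ Fin 1) := (eqR m).trans (eqL m).symm with hσ
  have h01 : A.det * W 1 0 = (Equiv.Perm.sign σ : ℚ) * (M.submatrix Fin.succ Fin.castSucc).det := by
    rw [← schurEntry 1 0]
    have e1 : (fromBlocks A (B.submatrix id (fun _ : Fin 1 => 0))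
        (C.submatrix (fun _ : Fin 1 => 1) id)
        (Dd.submatrix (fun _ : Fin 1 => 1) (fun _ : Fin 1 => 0)))
        = ((M.submatrix Fin.succ Fin.castSucc).submatrix (eqL m) (eqL m)).submatrix id σ := by
      ext (i | c) (j | d) <;>
        simp [hA, hB, hC, hDd, hinn, hcor, hσ, Matrix.fromBlocks, Fin.succ_castSucc, -Fin.castSucc_succ,
          Fin.succ_last] <;> rfl
    rw [e1, det_permute', det_submatrix_equiv_self]
  have h10 : A.det * W 0 1 = (Equiv.Perm.sign σ : ℚ) * (M.submatrix Fin.castSucc Fin.succ).det := by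
    rw [← schurEntry 0 1]
    have e1 : (fromBlocks A (B.submatrix id (fun _ : Fin 1 => 1))
        (C.submatrix (fun _ : Fin 1 => 0) id)
        (Dd.submatrix (fun _ : Fin 1 => 0) (fun _ : Fin 1 => 1)))
        = ((M.submatrix Fin.castSucc Fin.succ).submatrix (eqL m) (eqL m)).submatrix σ id := by
      ext (i | c) (j | d) <;>
        simp [hA, hB, hC, hDd, hinn, hcor, hσ, Matrix.fromBlocks, Fin.succ_castSucc, -Fin.castSucc_succ,
          Fin.succ_last] <;> rfl
    rw [e1, det_permute, det_submatrix_equiv_self]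
  have hmixed : (M.submatrix Fin.succ Fin.castSucc).det * (M.submatrix Fin.castSucc Fin.succ).det
      = (A.det * W 1 0) * (A.det * W 0 1) := by
    have hs : (Equiv.Perm.sign σ : ℚ) * (Equiv.Perm.sign σ : ℚ) = 1 := by
      rcases Int.units_eq_one_or (Equiv.Perm.sign σ) with hs | hs <;> rw [hs] <;> norm_num
    rw [h01, h10]
    linear_combination -((M.submatrix Fin.succ Fin.castSucc).det *
      (M.submatrix Fin.castSucc Fin.succ).det * hs)
  rw [hM, h00, h11, hmixed, det_fin_two W]
  ring
lemma L_ss (m x y : ℕ) :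
    (Dm (m + 2) x y).submatrix Fin.succ Fin.succ = Dm (m + 1) (x + 1) (y + 1) := by
  ext i j
  simp only [Dm, Matrix.submatrix_apply, Matrix.of_apply, ent, Fin.val_succ]
  exact if_congr (by omega) (entdiv_congr (by omega) (by omega) (by omega)) rfl

lemma L_cc (m x y : ℕ) :
    (Dm (m + 2) x y).submatrix Fin.castSucc Fin.castSucc = Dm (m + 1) x y := by
  ext i j
  simp only [Dm, Matrix.submatrix_apply, Matrix.of_apply, ent, Fin.coe_castSucc]

lemma L_sc (m x b : ℕ) :
    (Dm (m + 2) x (b + 1)).submatrix Fin.succ Fin.castSucc = Dm (m + 1) (x + 2) b := by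
  ext i j
  simp only [Dm, Matrix.submatrix_apply, Matrix.of_apply, ent, Fin.val_succ, Fin.coe_castSucc]
  exact if_congr (by omega) (entdiv_congr (by omega) (by omega) (by omega)) rfl

lemma L_cs (m a y : ℕ) :
    (Dm (m + 2) (a + 1) y).submatrix Fin.castSucc Fin.succ = Dm (m + 1) a (y + 2) := by
  ext i j
  simp only [Dm, Matrix.submatrix_apply, Matrix.of_apply, ent, Fin.val_succ, Fin.coe_castSucc]
  exact if_congr (by omega) (entdiv_congr (by omega) (by omega) (by omega)) rfl

lemma L_inn (m x y : ℕ) :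
    (Dm (m + 2) x y).submatrix (fun i : Fin m => i.castSucc.succ)
      (fun i : Fin m => i.castSucc.succ) = Dm m (x + 1) (y + 1) := by
  ext i j
  simp only [Dm, Matrix.submatrix_apply, Matrix.of_apply, ent, Fin.val_succ, Fin.coe_castSucc]
  exact if_congr (by omega) (entdiv_congr (by omega) (by omega) (by omega)) rfl

lemma Dm_transpose (n x y : ℕ) : Dm n x y = (Dm n y x).transpose := by
  ext i j
  simp only [Dm, Matrix.transpose_apply, Matrix.of_apply, ent]
  exact if_congr (by omega) (entdiv_congr' (by omega) (by omega) (by omega)) rfl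

lemma term_symm (x y i : ℕ) : term x y i = term y x i := by
  unfold term
  rw [show y + x + i - 1 = x + y + i - 1 from by omega,
    show 2 * y + x + 2 * i = x + 2 * y + 2 * i from by ring,
    show y + 2 * x + 2 * i = 2 * x + y + 2 * i from by ring]
  ring

lemma Fp_symm (n x y : ℕ) : Fp n x y = Fp n y x :=
  Finset.prod_congr rfl fun i _ => term_symm x y i
lemma fact_shift1 (n : ℕ) : ((n + 1).factorial : ℚ) = ((n : ℚ) + 1) * (n.factorial : ℚ) := by
  rw [Nat.factorial_succ]; push_cast; ring

lemma fact_shift2 (n : ℕ) : ((n + 2).factorial : ℚ) =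
    ((n : ℚ) + 2) * ((n : ℚ) + 1) * (n.factorial : ℚ) := by
  rw [show n + 2 = (n + 1) + 1 from rfl, fact_shift1, fact_shift1]; push_cast; ring

lemma fact_shift3 (n : ℕ) : ((n + 3).factorial : ℚ) =
    ((n : ℚ) + 3) * ((n : ℚ) + 2) * ((n : ℚ) + 1) * (n.factorial : ℚ) := by
  rw [show n + 3 = (n + 2) + 1 from rfl, fact_shift1, fact_shift2]; push_cast; ring

lemma step_id (a b m : ℕ) :
    term (a+3) b m * term a (b+3) m *
      (((a:ℚ)+b+m+3) * ((a:ℚ)+2*m+3) * ((b:ℚ)+2*m+3)) =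
    term (a+2) (b+2) m * term (a+1) (b+1) m *
      (((a:ℚ)+b+m+2) * ((a:ℚ)+2*m+1) * ((b:ℚ)+2*m+1)) := by
  unfold term
  rw [show a+3+b+m-1 = a+b+m+2 from by omega,
      show a+(b+3)+m-1 = a+b+m+2 from by omega,
      show a+2+(b+2)+m-1 = a+b+m+3 from by omega,
      show a+1+(b+1)+m-1 = a+b+m+1 from by omega,
      show 2*(a+3)+b+2*m = 2*a+b+2*m+6 from by ring,
      show a+3+2*b+2*m = a+2*b+2*m+3 from by ring,
      show 2*a+(b+3)+2*m = 2*a+b+2*m+3 from by ring,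
      show a+2*(b+3)+2*m = a+2*b+2*m+6 from by ring,
      show 2*(a+2)+(b+2)+2*m = 2*a+b+2*m+6 from by ring,
      show a+2+2*(b+2)+2*m = a+2*b+2*m+6 from by ring,
      show 2*(a+1)+(b+1)+2*m = 2*a+b+2*m+3 from by ring,
      show a+1+2*(b+1)+2*m = a+2*b+2*m+3 from by ring,
      show a+3+2*m = a+2*m+3 from by ring,
      show b+3+2*m = b+2*m+3 from by ring,
      show a+2+2*m = a+2*m+2 from by ring,
      show b+2+2*m = b+2*m+2 from by ring,
      show a+1+2*m = a+2*m+1 from by ring,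
      show b+1+2*m = b+2*m+1 from by ring]
  rw [show a+b+m+2 = (a+b+m+1)+1 from rfl, fact_shift1 (a+b+m+1),
      show a+b+m+1+1+1 = (a+b+m+1)+2 from rfl, fact_shift2 (a+b+m+1),
      fact_shift3 (a+2*m), fact_shift3 (b+2*m),
      fact_shift2 (a+2*m), fact_shift2 (b+2*m),
      fact_shift1 (a+2*m), fact_shift1 (b+2*m)]
  have h1 : ((a+2*m).factorial : ℚ) ≠ 0 := ne_of_gt (fact_pos_q _)
  have h2 : ((b+2*m).factorial : ℚ) ≠ 0 := ne_of_gt (fact_pos_q _)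
  have h3 : ((a:ℚ)+2*m+1) ≠ 0 := by positivity
  have h4 : ((a:ℚ)+2*m+2) ≠ 0 := by positivity
  have h5 : ((a:ℚ)+2*m+3) ≠ 0 := by positivity
  have h6 : ((b:ℚ)+2*m+1) ≠ 0 := by positivity
  have h7 : ((b:ℚ)+2*m+2) ≠ 0 := by positivity
  have h8 : ((b:ℚ)+2*m+3) ≠ 0 := by positivity
  push_cast
  field_simp
  ring

lemma lemII (a b m : ℕ) :
    term (a+1) (b+1) (m+1) *
      (((a:ℚ)+b+m+3) * ((a:ℚ)+2*m+3) * ((b:ℚ)+2*m+3)) =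
    term (a+2) (b+2) m *
      (((m:ℚ)+1) * (2*(a:ℚ)+b+2*m+5) * ((a:ℚ)+2*b+2*m+5)) := by
  unfold term
  rw [show a+1+(b+1)+(m+1)-1 = a+b+m+2 from by omega,
      show a+2+(b+2)+m-1 = a+b+m+3 from by omega,
      show 2*(a+1)+(b+1)+2*(m+1) = 2*a+b+2*m+5 from by ring,
      show a+1+2*(b+1)+2*(m+1) = a+2*b+2*m+5 from by ring,
      show 2*(a+2)+(b+2)+2*m = 2*a+b+2*m+6 from by ring,
      show a+2+2*(b+2)+2*m = a+2*b+2*m+6 from by ring,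
      show a+1+2*(m+1) = a+2*m+3 from by ring,
      show b+1+2*(m+1) = b+2*m+3 from by ring,
      show a+2+2*m = a+2*m+2 from by ring,
      show b+2+2*m = b+2*m+2 from by ring]
  have a1 : asc ((2*a+b+2*m+5 : ℕ) : ℚ) (m+1)
      = ((2*a+b+2*m+5 : ℕ) : ℚ) * asc ((2*a+b+2*m+6 : ℕ) : ℚ) m := by
    rw [asc_succ_left]; congr 1; push_cast; ring
  have a2 : asc ((a+2*b+2*m+5 : ℕ) : ℚ) (m+1)
      = ((a+2*b+2*m+5 : ℕ) : ℚ) * asc ((a+2*b+2*m+6 : ℕ) : ℚ) m := by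
    rw [asc_succ_left]; congr 1; push_cast; ring
  rw [a1, a2, fact_shift1 (a+b+m+2), fact_shift1 (a+2*m+2), fact_shift1 (b+2*m+2),
      fact_shift1 m]
  have h1 : ((a+2*m+2).factorial : ℚ) ≠ 0 := ne_of_gt (fact_pos_q _)
  have h2 : ((b+2*m+2).factorial : ℚ) ≠ 0 := ne_of_gt (fact_pos_q _)
  have h3 : ((a:ℚ)+2*m+3) ≠ 0 := by positivity
  have h4 : ((b:ℚ)+2*m+3) ≠ 0 := by positivity
  push_cast
  field_simp
  ring

lemma term_shift0 (b m : ℕ) : term 0 (b+1) (m+1) = term 1 (b+2) m := by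
  unfold term
  rw [show 0+(b+1)+(m+1)-1 = b+m+1 from by omega,
      show 1+(b+2)+m-1 = b+m+2 from by omega,
      show 2*0+(b+1)+2*(m+1) = b+2*m+3 from by ring,
      show 0+2*(b+1)+2*(m+1) = 2*b+2*m+4 from by ring,
      show 2*1+(b+2)+2*m = b+2*m+4 from by ring,
      show 1+2*(b+2)+2*m = 2*b+2*m+5 from by ring,
      show 0+2*(m+1) = 2*m+2 from by ring,
      show b+1+2*(m+1) = b+2*m+3 from by ring,
      show 1+2*m = 2*m+1 from by ring,
      show b+2+2*m = b+2*m+2 from by ring]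
  have a1 : asc ((b+2*m+3 : ℕ) : ℚ) (m+1)
      = ((b+2*m+3 : ℕ) : ℚ) * asc ((b+2*m+4 : ℕ) : ℚ) m := by
    rw [asc_succ_left]; congr 1; push_cast; ring
  have a2 : asc ((2*b+2*m+4 : ℕ) : ℚ) (m+1)
      = ((2*b+2*m+4 : ℕ) : ℚ) * asc ((2*b+2*m+5 : ℕ) : ℚ) m := by
    rw [asc_succ_left]; congr 1; push_cast; ring
  rw [a1, a2, fact_shift1 (b+m+1), fact_shift1 (2*m+1), fact_shift1 (b+2*m+2),
      fact_shift1 m]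
  have h1 : ((2*m+1).factorial : ℚ) ≠ 0 := ne_of_gt (fact_pos_q _)
  have h2 : ((b+2*m+2).factorial : ℚ) ≠ 0 := ne_of_gt (fact_pos_q _)
  have h3 : ((b:ℚ)+2*m+3) ≠ 0 := by positivity
  have h4 : (2*(m:ℚ)+2) ≠ 0 := by positivity
  push_cast
  field_simp
  ring

lemma lemI (a b : ℕ) : ∀ m : ℕ,
    Fp m (a+3) b * Fp m a (b+3) *
      (((a:ℚ)+b+m+2) * ((a:ℚ)+2*m+1) * ((b:ℚ)+2*m+1)) =
    Fp m (a+2) (b+2) * Fp m (a+1) (b+1) *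
      (((a:ℚ)+1) * ((b:ℚ)+1) * ((a:ℚ)+b+2)) := by
  intro m
  induction m with
  | zero => simp [Fp]; ring
  | succ m ih =>
    rw [Fp_succ, Fp_succ, Fp_succ, Fp_succ]
    push_cast
    linear_combination (Fp m (a+3) b * Fp m a (b+3)) * step_id a b m +
      (term (a+2) (b+2) m * term (a+1) (b+1) m) * ih

lemma Qid (a b m : ℕ) :
    Fp (m+2) (a+1) (b+1) * Fp m (a+2) (b+2) =
      Fp (m+1) (a+2) (b+2) * Fp (m+1) (a+1) (b+1) -
      Fp (m+1) (a+3) b * Fp (m+1) a (b+3) := by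
  have hC : (((a:ℚ)+b+m+3) * ((a:ℚ)+2*m+3) * ((b:ℚ)+2*m+3)) ≠ 0 := by positivity
  apply mul_right_cancel₀ hC
  have e1 : Fp (m+2) (a+1) (b+1) = Fp (m+1) (a+1) (b+1) * term (a+1) (b+1) (m+1) :=
    Fp_succ (m+1) _ _
  have e2 : Fp (m+1) (a+2) (b+2) = Fp m (a+2) (b+2) * term (a+2) (b+2) m := Fp_succ m _ _
  have hI := lemI a b (m+1)
  push_cast at hI
  rw [e2] at hI
  have hII := lemII a b m
  have hF5 : (((a:ℚ)+b+m+3) * ((a:ℚ)+2*m+3) * ((b:ℚ)+2*m+3)) =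
      ((m:ℚ)+1)*(2*(a:ℚ)+b+2*m+5)*((a:ℚ)+2*b+2*m+5) +
      ((a:ℚ)+1)*((b:ℚ)+1)*((a:ℚ)+b+2) := by ring
  rw [e1, e2]
  linear_combination (Fp (m+1) (a+1) (b+1) * Fp m (a+2) (b+2)) * hII + hI -
    (Fp m (a+2) (b+2) * term (a+2) (b+2) m * Fp (m+1) (a+1) (b+1)) * hF5

lemma Fp_x0 (b k : ℕ) : Fp (k+1) 0 (b+1) = term 0 (b+1) 0 * Fp k 1 (b+2) := by
  rw [Fp, Finset.prod_range_succ', mul_comm]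
  congr 1
  exact Finset.prod_congr rfl fun i _ => term_shift0 b i

theorem main : ∀ n x y : ℕ, 1 ≤ x + y → (Dm n x y).det = Fp n x y := by
  intro n
  induction n using Nat.strong_induction_on with
  | _ n IH =>
    rcases n with _ | n
    · intro x y h
      simp [Fp, Matrix.det_fin_zero]
    rcases n with _ | m
    · intro x y h
      rw [Matrix.det_fin_one, Fp, Finset.prod_range_one]
      show ent x y 0 0 = term x y 0
      rw [ent, if_pos (by omega), term]
      norm_num [asc]
    · intro x y h
      have key0 : ∀ b : ℕ, (Dm (m+2) 0 (b+1)).det = Fp (m+2) 0 (b+1) := by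
        intro b
        rw [Matrix.det_succ_row_zero]
        rw [Fintype.sum_eq_single (0 : Fin (m+2)) ?side]
        case side =>
          intro j hj
          have hj1 : (j : ℕ) ≠ 0 := fun hc => hj (Fin.ext hc)
          have hz : (Dm (m+2) 0 (b+1)) 0 j = 0 := by
            show ent 0 (b+1) 0 (j : ℕ) = 0
            rw [ent, if_neg (by omega)]
          rw [hz]
          ring
        rw [Fin.succAbove_zero, L_ss]
        rw [IH (m+1) (by omega) 1 (b+2) (by omega)]
        rw [Fp_x0 b (m+1)]
        have he : (Dm (m+2) 0 (b+1)) 0 0 = term 0 (b+1) 0 := by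
          show ent 0 (b+1) 0 0 = term 0 (b+1) 0
          rw [ent, if_pos (by omega), term]
          norm_num [asc]
        rw [he]
        norm_num
      rcases x with _ | a
      · rcases y with _ | b
        · omega
        · exact key0 b
      · rcases y with _ | b
        · rw [Dm_transpose, Matrix.det_transpose, Fp_symm]
          exact key0 a
        · -- main Dodgson case
          have hinner : (Dm (m+2) (a+1) (b+1)).submatrix (fun i : Fin m => i.castSucc.succ)
              (fun i : Fin m => i.castSucc.succ) = Dm m (a+2) (b+2) := L_inn m (a+1) (b+1)
          have hIm : (Dm m (a+2) (b+2)).det = Fp m (a+2) (b+2) :=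
            IH m (by omega) _ _ (by omega)
          have hpos : 0 < Fp m (a+2) (b+2) := Fp_pos m (by omega)
          have hdj := dodgson (Dm (m+2) (a+1) (b+1))
            (by rw [hinner, hIm]; exact ne_of_gt hpos)
          rw [hinner, hIm, L_ss, L_cc, L_sc, L_cs] at hdj
          rw [IH (m+1) (by omega) (a+2) (b+2) (by omega),
              IH (m+1) (by omega) (a+1) (b+1) (by omega),
              IH (m+1) (by omega) (a+3) b (by omega),
              IH (m+1) (by omega) a (b+3) (by omega)] at hdj
          have hq := Qid a b m
          exact mul_right_cancel₀ (ne_of_gt hpos) (hdj.trans hq.symm)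

theorem stmt4 (n x y : ℕ) (hxy : 1 ≤ x + y) :
    Matrix.det (Matrix.of fun i j : Fin n =>
        if j.val ≤ x + 2 * i.val ∧ i.val ≤ y + 2 * j.val then
          (Nat.factorial (x + y + i.val + j.val - 1) : ℚ) /
            ((Nat.factorial (x + 2 * i.val - j.val) : ℚ) *
              (Nat.factorial (y + 2 * j.val - i.val) : ℚ))
        else 0) =
      ∏ i ∈ Finset.range n,
        (Nat.factorial i : ℚ) * (Nat.factorial (x + y + i - 1) : ℚ) *
            asc ((2 * x + y + 2 * i : ℕ) : ℚ) i * asc ((x + 2 * y + 2 * i : ℕ) : ℚ) i /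
          ((Nat.factorial (x + 2 * i) : ℚ) * (Nat.factorial (y + 2 * i) : ℚ)) := by
  exact main n x y hxy
end DJ
end

section
/- For integers m even, a even, let B(N,μ) denote the N×N matrix with entries binomial(μ+i+j, j), 0 ≤ i,j ≤ N-1, and I(N) the identity. Then the (a×a) determinant det_{0≤i,j≤a-1}(δ_{ij} + (-1)^j [m+i+j choose j]_{-1}) (with [·]_{-1} the q-binomial at q=-1) equals det(I(a/2) + B(a/2, m/2) + B(a/2, m/2)²). -/
open Polynomial

theorem qbinom_eval_neg_one (n k : ℕ) :
    (qbinom n k).eval (-1) = if Even n ∧ Odd k then 0 else ((n / 2).choose (k / 2) : ℤ) := by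
  induction n generalizing k with
  | zero =>
    rcases k with _ | k
    · simp [qbinom]
    · rw [qbinom.eq_2, eval_zero]
      split_ifs with h
      · rfl
      · simp only [Even.zero, true_and, Nat.not_odd_iff_even] at h
        rw [Nat.choose_eq_zero_of_lt (by grind), Nat.cast_zero]
  | succ n ih =>
    rcases k with _ | k
    · simp [qbinom]
    · simp only [qbinom, eval_add, eval_mul, eval_pow, eval_X, ih]
      rcases Nat.even_or_odd' n with ⟨n, rfl | rfl⟩ <;>
        rcases Nat.even_or_odd' k with ⟨k, rfl | rfl⟩
      all_goals
        simp [parity_simps, pow_succ, Nat.choose_succ_succ',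
          show ∀ x, (2 * x + 1) / 2 = x by omega, show ∀ x, (2 * x + 1 + 1) / 2 = x + 1 by omega]

def finSumFinInterleave (n : ℕ) : Fin n ⊕ Fin n ≃ Fin (2 * n) where
  toFun := Sum.elim (fun s => ⟨2 * s, by omega⟩) (fun s => ⟨2 * s + 1, by omega⟩)
  invFun i := if i.val % 2 = 0 then .inl ⟨i / 2, by omega⟩ else .inr ⟨i / 2, by omega⟩
  left_inv := by rintro (s | s) <;> simp [Fin.ext_iff]; omega
  right_inv i := by dsimp only; split_ifs <;> ext <;> simp <;> omega

@[simp] theorem finSumFinInterleave_inl_val {n : ℕ} (s : Fin n) :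
    (finSumFinInterleave n (.inl s) : ℕ) = 2 * s := rfl

@[simp] theorem finSumFinInterleave_inr_val {n : ℕ} (s : Fin n) :
    (finSumFinInterleave n (.inr s) : ℕ) = 2 * s + 1 := rfl

section

variable (R : Type*) [CommRing R]

noncomputable def qbinomNegOneMatrix (m a : ℕ) : Matrix (Fin a) (Fin a) R :=
  Matrix.of fun i j =>
    (if i = j then 1 else 0) + (-1) ^ j.val * (((qbinom (m + i + j) j).eval (-1) : ℤ) : R)

def binomMatrix (μ N : ℕ) : Matrix (Fin N) (Fin N) R :=
  Matrix.of fun i j => ((μ + i + j).choose j : R)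

theorem qbinomNegOneMatrix_submatrix_finSumFinInterleave (μ N : ℕ) :
    (qbinomNegOneMatrix R (2 * μ) (2 * N)).submatrix
        (finSumFinInterleave N) (finSumFinInterleave N) =
      Matrix.fromBlocks (1 + binomMatrix R μ N) (-binomMatrix R μ N) (binomMatrix R μ N) 1 := by
  have h₀ (s t : ℕ) : (2 * μ + 2 * s + 2 * t) / 2 = μ + s + t := by omega
  have h₁ (s t : ℕ) : (2 * μ + 2 * s + (2 * t + 1)) / 2 = μ + s + t := by omega
  have h₂ (s t : ℕ) : (2 * μ + (2 * s + 1) + 2 * t) / 2 = μ + s + t := by omega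
  have h₃ (t : ℕ) : (2 * t + 1) / 2 = t := by omega
  have h₄ (s t : ℕ) : 2 * s ≠ 2 * t + 1 := by omega
  ext (s | s) (t | t) <;>
    simp [qbinomNegOneMatrix, binomMatrix, qbinom_eval_neg_one, Matrix.one_apply, parity_simps,
      Fin.ext_iff, h₀, h₁, h₂, h₃, h₄, (h₄ _ _).symm]

theorem det_qbinomNegOneMatrix (μ N : ℕ) :
    (qbinomNegOneMatrix R (2 * μ) (2 * N)).det =
      (1 + binomMatrix R μ N + binomMatrix R μ N * binomMatrix R μ N).det := by
  rw [← Matrix.det_submatrix_equiv_self (finSumFinInterleave N),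
    qbinomNegOneMatrix_submatrix_finSumFinInterleave, Matrix.det_fromBlocks_one₂₂,
    Matrix.neg_mul, sub_neg_eq_add]

end

theorem stmt9 (a m : ℕ) (ha : Even a) (hm : Even m) :
    let B : Matrix (Fin (a / 2)) (Fin (a / 2)) ℚ :=
      Matrix.of fun i j => (Nat.choose (m / 2 + i.val + j.val) j.val : ℚ)
    Matrix.det (Matrix.of fun i j : Fin a =>
        (if i = j then (1 : ℚ) else 0) +
          (-1 : ℚ) ^ j.val * (((qbinom (m + i.val + j.val) j.val).eval (-1) : ℤ) : ℚ)) =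
      Matrix.det (1 + B + B * B) := by
  obtain ⟨μ, rfl⟩ := hm.two_dvd
  have ha' := Nat.two_mul_div_two_of_even ha
  generalize a / 2 = N at ha' ⊢
  subst ha'
  rw [Nat.mul_div_cancel_left _ two_pos]
  exact det_qbinomNegOneMatrix ℚ μ N
end

section
/- Let a, m, e, s be integers with a, m even nonnegative, m < e < a, e ≡ a (mod 2), 1 ≤ s ≤ m, and let c be an indeterminate (rational function field). For each row index 1 ≤ i ≤ a, the following sum vanishes: ∑_{j=1}^{e+s-m} C(e-m+s-1, j-1) · [(c+a-e-s+2m+1)_{e+s-j-m} / (a-e-s+2m+1)_{e+s-j-m}] · (c+m+i-j+1)_{j-1} · (-e-i+j+1)_{a+m-j} = 0, where (α)_k is the rising factorial. -/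
open Finset Polynomial

lemma asc_add (x : ℚ) (p q : ℕ) : asc x (p + q) = asc x p * asc (x + p) q := by
  unfold asc
  rw [Finset.prod_range_add]
  congr 1
  apply Finset.prod_congr rfl
  intro u _
  push_cast
  ring

lemma asc_pos_s11 {x : ℚ} (hx : 0 < x) (n : ℕ) : 0 < asc x n := by
  unfold asc
  apply Finset.prod_pos
  intro u _
  have : (0:ℚ) ≤ u := by positivity
  linarith

lemma asc_reflect (x : ℚ) (n : ℕ) : asc x n = (-1)^n * asc (-x - n + 1) n := by
  unfold asc
  rw [← Finset.prod_range_reflect (fun u => x + u) n]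
  have : ∀ j ∈ Finset.range n, (x + ((n - 1 - j : ℕ) : ℚ)) = (-1) * (-x - n + 1 + j) := by
    intro j hj
    have hj' : j < n := Finset.mem_range.mp hj
    have h1 : n - 1 - j = n - (j + 1) := by omega
    rw [h1, Nat.cast_sub (by omega)]
    push_cast
    ring
  rw [Finset.prod_congr rfl this, Finset.prod_mul_distrib, Finset.prod_const, Finset.card_range]

lemma fwdDiff_poly_eval (P : Polynomial ℚ) :
    fwdDiff (1:ℚ) (fun x => P.eval x) = fun x => (P.comp (X + Polynomial.C 1) - P).eval x := by
  funext x
  simp [fwdDiff, Polynomial.eval_comp]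

lemma comp_X_add_one_ne_zero (P : Polynomial ℚ) (hP : P ≠ 0) :
    P.comp (X + Polynomial.C 1) ≠ 0 := by
  intro h
  have hlc : (P.comp (X + Polynomial.C 1)).leadingCoeff = P.leadingCoeff := by
    rw [Polynomial.leadingCoeff_comp (by rw [Polynomial.natDegree_X_add_C]; exact one_ne_zero),
      Polynomial.leadingCoeff_X_add_C, one_pow, mul_one]
  rw [h] at hlc
  exact hP (Polynomial.leadingCoeff_eq_zero.mp hlc.symm)

lemma degree_comp_sub_lt (P : Polynomial ℚ) (hP : P ≠ 0) :
    (P.comp (X + Polynomial.C 1) - P).degree < P.degree := by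
  have hc := comp_X_add_one_ne_zero P hP
  have hdeg : (P.comp (X + Polynomial.C 1)).degree = P.degree := by
    rw [Polynomial.degree_eq_natDegree hc, Polynomial.degree_eq_natDegree hP,
      Polynomial.natDegree_comp, Polynomial.natDegree_X_add_C, mul_one]
  calc (P.comp (X + Polynomial.C 1) - P).degree < (P.comp (X + Polynomial.C 1)).degree := by
        apply Polynomial.degree_sub_lt hdeg hc
        rw [Polynomial.leadingCoeff_comp (by rw [Polynomial.natDegree_X_add_C]; exact one_ne_zero),
          Polynomial.leadingCoeff_X_add_C, one_pow, mul_one]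
    _ = P.degree := hdeg

lemma fwdDiff_iter_poly (N : ℕ) : ∀ P : Polynomial ℚ, P.degree < (N : ℕ) →
    (fwdDiff (1:ℚ))^[N] (fun x => P.eval x) = fun _ => 0 := by
  induction N with
  | zero =>
    intro P hP
    have : P = 0 := by
      rwa [Nat.cast_zero, Nat.WithBot.lt_zero_iff, Polynomial.degree_eq_bot] at hP
    subst this
    simp
  | succ N ih =>
    intro P hP
    rw [Function.iterate_succ_apply, fwdDiff_poly_eval]
    apply ih
    by_cases hP0 : P = 0
    · simp [hP0]
    · have h1 := degree_comp_sub_lt P hP0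
      have h2 : P.degree ≤ (N : ℕ) := by
        rcases h : P.degree with _ | d
        · exact bot_le
        · rw [h, Nat.cast_withBot] at hP
          have hd : d < N + 1 := WithBot.coe_lt_coe.mp hP
          rw [Nat.cast_withBot]
          exact WithBot.coe_le_coe.mpr (by omega)
      exact lt_of_lt_of_le h1 h2

lemma alt_sum_poly (N : ℕ) (P : Polynomial ℚ) (hP : P.degree < (N : ℕ)) :
    ∑ k ∈ Finset.range (N+1), (-1:ℚ)^k * (N.choose k) * P.eval (k:ℚ) = 0 := by
  have h := fwdDiff_iter_eq_sum_shift (1:ℚ) (fun x => P.eval x) N 0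
  rw [fwdDiff_iter_poly N P hP] at h
  have h2 : ∑ k ∈ Finset.range (N+1), (-1:ℚ)^(N-k) * (N.choose k) * P.eval (k:ℚ) = 0 := by
    have := h.symm
    simpa [zsmul_eq_mul, nsmul_eq_mul, mul_assoc] using this
  calc ∑ k ∈ Finset.range (N+1), (-1:ℚ)^k * (N.choose k) * P.eval (k:ℚ)
      = ∑ k ∈ Finset.range (N+1), (-1:ℚ)^N * ((-1:ℚ)^(N-k) * (N.choose k) * P.eval (k:ℚ)) := by
        apply Finset.sum_congr rfl
        intro k hk
        have hk' : k ≤ N := Nat.lt_succ_iff.mp (Finset.mem_range.mp hk)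
        have hs : (-1:ℚ)^N * (-1:ℚ)^(N-k) = (-1:ℚ)^k := by
          rw [← pow_add]
          have : N + (N - k) = k + 2*(N-k) := by omega
          rw [this, pow_add, pow_mul]
          simp
        rw [← hs]
        ring
    _ = (-1:ℚ)^N * ∑ k ∈ Finset.range (N+1), (-1:ℚ)^(N-k) * (N.choose k) * P.eval (k:ℚ) := by
        rw [Finset.mul_sum]
    _ = 0 := by rw [h2, mul_zero]

lemma term_eq (a m e s i k : ℕ) (c : ℚ) (hme : m < e) (hea : e < a)
    (hs1 : 1 ≤ s) (hsm : s ≤ m) (hi1 : 1 ≤ i) (hia : i ≤ a)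
    (hcase : a + m < e + i) (hk : k ≤ e + s - m - 1) :
    (Nat.choose (e+s-m-1) k : ℚ) *
      (asc (c + a - e - s + 2*m + 1) (e+s-m-1-k) / asc ((a:ℚ) - e - s + 2*m + 1) (e+s-m-1-k)) *
      (asc (c + m + i - k) k * asc ((k:ℚ) + 2 - e - i) (a+m-1-k)) *
      (asc ((a:ℚ) - e - s + 2*m + 1) (e+s-m-1) * asc 1 (e+i-a-m-1))
    = ((-1:ℚ)^(a+m-1) * asc 1 (a+m-1) * asc (c + a - e - s + 2*m + 1) (e+s+i-a-m-1)) *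
      ((-1:ℚ)^k * ((e+s-m-1).choose k : ℚ) *
        (asc ((a:ℚ) + m - k) (e+i-a-m-1) * asc (c + m + i - k) (a-i))) := by
  -- cast facts
  have cNn : ((e+s-m-1 : ℕ):ℚ) = (e:ℚ)+s-m-1 := by
    rw [Nat.cast_sub (by omega), Nat.cast_sub (by omega)]; push_cast; ring
  have cNnk : ((e+s-m-1-k : ℕ):ℚ) = (e:ℚ)+s-m-1-k := by
    rw [Nat.cast_sub hk, cNn]
  have cA : ((a+m-1-k : ℕ):ℚ) = (a:ℚ)+m-1-k := by
    rw [Nat.cast_sub (by omega), Nat.cast_sub (by omega)]; push_cast; ring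
  have cD1 : ((e+i-a-m-1 : ℕ):ℚ) = (e:ℚ)+i-a-m-1 := by
    rw [Nat.cast_sub (by omega), Nat.cast_sub (by omega), Nat.cast_sub (by omega)]
    push_cast; ring
  have cL : ((e+s+i-a-m-1 : ℕ):ℚ) = (e:ℚ)+s+i-a-m-1 := by
    rw [Nat.cast_sub (by omega), Nat.cast_sub (by omega), Nat.cast_sub (by omega)]
    push_cast; ring
  have cai : ((a-i : ℕ):ℚ) = (a:ℚ)-i := Nat.cast_sub hia
  have hq0pos : (0:ℚ) < (a:ℚ) - e - s + 2*m + 1 := by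
    have h : (e:ℚ) + s ≤ (a:ℚ) + 2*m := by exact_mod_cast (by omega : e + s ≤ a + 2*m)
    linarith
  have hQne : asc ((a:ℚ) - e - s + 2*m + 1) (e+s-m-1-k) ≠ 0 := ne_of_gt (asc_pos_s11 hq0pos _)
  -- F1
  have F1 : asc ((a:ℚ) - e - s + 2*m + 1) (e+s-m-1)
      = asc ((a:ℚ) - e - s + 2*m + 1) (e+s-m-1-k) * asc ((a:ℚ) + m - k) k := by
    have h := asc_add ((a:ℚ) - e - s + 2*m + 1) (e+s-m-1-k) k
    rw [show e+s-m-1-k+k = e+s-m-1 from by omega] at h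
    rw [show (a:ℚ) - e - s + 2*m + 1 + ((e+s-m-1-k : ℕ):ℚ) = (a:ℚ) + m - k from by
      rw [cNnk]; ring] at h
    exact h
  -- S1 (reflect)
  have S1 : asc ((k:ℚ) + 2 - e - i) (a+m-1-k)
      = (-1:ℚ)^(a+m-1-k) * asc ((e:ℚ)+i-a-m) (a+m-1-k) := by
    rw [asc_reflect]
    rw [show -((k:ℚ) + 2 - e - i) - ((a+m-1-k : ℕ):ℚ) + 1 = (e:ℚ)+i-a-m from by
      rw [cA]; ring]
  -- S2
  have S2 : asc 1 (e+i-a-m-1) * asc ((e:ℚ)+i-a-m) (a+m-1-k)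
      = asc 1 (a+m-1-k) * asc ((a:ℚ)+m-k) (e+i-a-m-1) := by
    have h1 := asc_add 1 (e+i-a-m-1) (a+m-1-k)
    have h2 := asc_add 1 (a+m-1-k) (e+i-a-m-1)
    rw [show e+i-a-m-1+(a+m-1-k) = e+i-2-k from by omega] at h1
    rw [show a+m-1-k+(e+i-a-m-1) = e+i-2-k from by omega] at h2
    rw [show (1:ℚ) + ((e+i-a-m-1 : ℕ):ℚ) = (e:ℚ)+i-a-m from by rw [cD1]; ring] at h1
    rw [show (1:ℚ) + ((a+m-1-k : ℕ):ℚ) = (a:ℚ)+m-k from by rw [cA]; ring] at h2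
    rw [← h1, ← h2]
  -- S3
  have S3 : asc ((a:ℚ)+m-k) k * asc 1 (a+m-1-k) = asc 1 (a+m-1) := by
    have h := asc_add 1 (a+m-1-k) k
    rw [show a+m-1-k+k = a+m-1 from by omega] at h
    rw [show (1:ℚ) + ((a+m-1-k : ℕ):ℚ) = (a:ℚ)+m-k from by rw [cA]; ring] at h
    rw [h]; ring
  -- S4
  have S4 : asc (c + a - e - s + 2*m + 1) (e+s-m-1-k) * asc (c + m + i - k) k
      = asc (c + a - e - s + 2*m + 1) (e+s+i-a-m-1) * asc (c + m + i - k) (a-i) := by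
    rcases le_or_gt k (a-i) with h | h
    · have h1 := asc_add (c + a - e - s + 2*m + 1) (e+s+i-a-m-1) (a-i-k)
      have h2 := asc_add (c + (m:ℚ) + i - k) k (a-i-k)
      rw [show e+s+i-a-m-1+(a-i-k) = e+s-m-1-k from by omega] at h1
      rw [show k+(a-i-k) = a-i from by omega] at h2
      rw [show c + (a:ℚ) - e - s + 2*m + 1 + ((e+s+i-a-m-1 : ℕ):ℚ) = c + (m:ℚ) + i from by
        rw [cL]; ring] at h1
      rw [show c + (m:ℚ) + i - k + ((k : ℕ):ℚ) = c + (m:ℚ) + i from by push_cast; ring] at h2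
      rw [h1, h2]; ring
    · have h1 := asc_add (c + a - e - s + 2*m + 1) (e+s-m-1-k) (k-(a-i))
      have h2 := asc_add (c + (m:ℚ) + i - k) (a-i) (k-(a-i))
      rw [show e+s-m-1-k+(k-(a-i)) = e+s+i-a-m-1 from by omega] at h1
      rw [show a-i+(k-(a-i)) = k from by omega] at h2
      rw [show c + (a:ℚ) - e - s + 2*m + 1 + ((e+s-m-1-k : ℕ):ℚ) = c + (a:ℚ) + m - k from by
        rw [cNnk]; ring] at h1
      rw [show c + (m:ℚ) + i - k + ((a-i : ℕ):ℚ) = c + (a:ℚ) + m - k from by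
        rw [cai]; ring] at h2
      rw [h1, h2]; ring
  -- S5
  have S5 : ((-1:ℚ))^(a+m-1) * (-1:ℚ)^k = (-1:ℚ)^(a+m-1-k) := by
    rw [← pow_add, show a+m-1+k = (a+m-1-k)+2*k from by omega, pow_add, pow_mul]
    simp
  -- assembly
  rw [F1, S1]
  have hstep1 : (Nat.choose (e+s-m-1) k : ℚ) *
      (asc (c + a - e - s + 2*m + 1) (e+s-m-1-k) / asc ((a:ℚ) - e - s + 2*m + 1) (e+s-m-1-k)) *
      (asc (c + m + i - k) k * ((-1:ℚ)^(a+m-1-k) * asc ((e:ℚ)+i-a-m) (a+m-1-k))) *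
      (asc ((a:ℚ) - e - s + 2*m + 1) (e+s-m-1-k) * asc ((a:ℚ) + m - k) k * asc 1 (e+i-a-m-1))
      = (-1:ℚ)^(a+m-1-k) * (Nat.choose (e+s-m-1) k : ℚ) *
        ((asc (c + a - e - s + 2*m + 1) (e+s-m-1-k) * asc (c + m + i - k) k) *
          asc ((a:ℚ) + m - k) k *
          (asc 1 (e+i-a-m-1) * asc ((e:ℚ)+i-a-m) (a+m-1-k))) := by
    field_simp
  rw [hstep1, S4, S2]
  rw [show (asc (c + a - e - s + 2*m + 1) (e+s+i-a-m-1) * asc (c + m + i - k) (a-i)) *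
      asc ((a:ℚ) + m - k) k *
      (asc 1 (a+m-1-k) * asc ((a:ℚ)+m-k) (e+i-a-m-1))
      = (asc (c + a - e - s + 2*m + 1) (e+s+i-a-m-1) * asc (c + m + i - k) (a-i)) *
        (asc ((a:ℚ)+m-k) k * asc 1 (a+m-1-k)) * asc ((a:ℚ)+m-k) (e+i-a-m-1) from by ring,
    S3, ← S5]
  ring

theorem stmt11 (a m e s i : ℕ) (ha : Even a) (hm : Even m)
    (hme : m < e) (hea : e < a) (hpar : e % 2 = a % 2)
    (hs1 : 1 ≤ s) (hsm : s ≤ m) (hi1 : 1 ≤ i) (hia : i ≤ a) (c : ℚ) :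
    ∑ j ∈ Finset.Icc 1 (e + s - m),
        (Nat.choose (e - m + s - 1) (j - 1) : ℚ) *
          (asc (c + a - e - s + 2 * m + 1) (e + s - j - m) /
            asc ((a : ℚ) - e - s + 2 * m + 1) (e + s - j - m)) *
          (asc (c + m + i - j + 1) (j - 1) *
            asc (-(e : ℚ) - i + j + 1) (a + m - j)) = 0 := by
  rw [← Finset.Ico_add_one_right_eq_Icc, Finset.sum_Ico_eq_sum_range]
  rw [show e + s - m + 1 - 1 = e + s - m from by omega]
  by_cases hcase : e + i ≤ a + m
  · -- every term vanishes
    apply Finset.sum_eq_zero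
    intro k hk
    have hk' : k < e + s - m := Finset.mem_range.mp hk
    have hzero : asc (-(e:ℚ) - i + ((1+k : ℕ):ℚ) + 1) (a + m - (1+k)) = 0 := by
      unfold asc
      refine Finset.prod_eq_zero (i := e + i - k - 2) (Finset.mem_range.mpr (by omega)) ?_
      rw [Nat.cast_sub (by omega), Nat.cast_sub (by omega)]
      push_cast
      ring
    rw [hzero, mul_zero, mul_zero]
  · push_neg at hcase
    rw [show e + s - m = (e + s - m - 1) + 1 from by omega]
    -- the polynomial
    set P : Polynomial ℚ :=
      (∏ u ∈ Finset.range (e+i-a-m-1), (Polynomial.C ((a:ℚ)+m+u) - X)) *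
      (∏ u ∈ Finset.range (a-i), (Polynomial.C (c+(m:ℚ)+i+u) - X)) with hPdef
    have hfacdeg : ∀ r : ℚ, (Polynomial.C r - X).degree = 1 := by
      intro r
      rw [show Polynomial.C r - X = -(X - Polynomial.C r) from by ring, Polynomial.degree_neg,
        Polynomial.degree_X_sub_C]
    have hfacne : ∀ r : ℚ, (Polynomial.C r - X) ≠ 0 := by
      intro r h
      have := hfacdeg r
      rw [h, Polynomial.degree_zero] at this
      exact absurd this (by simp)
    have hfacnat : ∀ r : ℚ, (Polynomial.C r - X).natDegree = 1 := fun r =>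
      Polynomial.natDegree_eq_of_degree_eq_some (hfacdeg r)
    have hP1ne : (∏ u ∈ Finset.range (e+i-a-m-1), (Polynomial.C ((a:ℚ)+m+u) - X)) ≠ 0 :=
      Finset.prod_ne_zero_iff.mpr (fun u _ => hfacne _)
    have hP2ne : (∏ u ∈ Finset.range (a-i), (Polynomial.C (c+(m:ℚ)+i+u) - X)) ≠ 0 :=
      Finset.prod_ne_zero_iff.mpr (fun u _ => hfacne _)
    have hPne : P ≠ 0 := mul_ne_zero hP1ne hP2ne
    have hPnat : P.natDegree = (e+i-a-m-1) + (a-i) := by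
      rw [hPdef, Polynomial.natDegree_mul hP1ne hP2ne,
        Polynomial.natDegree_prod _ _ (fun u _ => hfacne _),
        Polynomial.natDegree_prod _ _ (fun u _ => hfacne _)]
      simp only [hfacnat, Finset.sum_const, Finset.card_range, smul_eq_mul, mul_one]
    have hPdeg : P.degree < ((e+s-m-1 : ℕ) : WithBot ℕ) := by
      rw [Polynomial.degree_eq_natDegree hPne, hPnat, Nat.cast_withBot, Nat.cast_withBot]
      exact WithBot.coe_lt_coe.mpr (by omega)
    have hsum := alt_sum_poly (e+s-m-1) P hPdeg
    -- positive multiplier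
    have hq0pos : (0:ℚ) < (a:ℚ) - e - s + 2*m + 1 := by
      have h : (e:ℚ) + s ≤ (a:ℚ) + 2*m := by exact_mod_cast (by omega : e + s ≤ a + 2*m)
      linarith
    have hMne : asc ((a:ℚ) - e - s + 2*m + 1) (e+s-m-1) * asc 1 (e+i-a-m-1) ≠ 0 :=
      ne_of_gt (mul_pos (asc_pos_s11 hq0pos _) (asc_pos_s11 one_pos _))
    have key : (∑ k ∈ Finset.range (e+s-m-1+1),
        (Nat.choose (e - m + s - 1) (1+k-1) : ℚ) *
          (asc (c + a - e - s + 2 * m + 1) (e + s - (1+k) - m) /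
            asc ((a : ℚ) - e - s + 2 * m + 1) (e + s - (1+k) - m)) *
          (asc (c + m + i - ((1+k : ℕ):ℚ) + 1) (1+k-1) *
            asc (-(e : ℚ) - i + ((1+k : ℕ):ℚ) + 1) (a + m - (1+k)))) *
        (asc ((a:ℚ) - e - s + 2*m + 1) (e+s-m-1) * asc 1 (e+i-a-m-1)) = 0 := by
      rw [Finset.sum_mul]
      have hterm : ∀ k ∈ Finset.range (e+s-m-1+1),
          (Nat.choose (e - m + s - 1) (1+k-1) : ℚ) *
            (asc (c + a - e - s + 2 * m + 1) (e + s - (1+k) - m) /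
              asc ((a : ℚ) - e - s + 2 * m + 1) (e + s - (1+k) - m)) *
            (asc (c + m + i - ((1+k : ℕ):ℚ) + 1) (1+k-1) *
              asc (-(e : ℚ) - i + ((1+k : ℕ):ℚ) + 1) (a + m - (1+k))) *
            (asc ((a:ℚ) - e - s + 2*m + 1) (e+s-m-1) * asc 1 (e+i-a-m-1))
          = ((-1:ℚ)^(a+m-1) * asc 1 (a+m-1) * asc (c + a - e - s + 2*m + 1) (e+s+i-a-m-1)) *
            ((-1:ℚ)^k * ((e+s-m-1).choose k : ℚ) * P.eval (k:ℚ)) := by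
        intro k hk
        have hkN : k ≤ e + s - m - 1 := by
          have := Finset.mem_range.mp hk; omega
        have hPeval : P.eval (k:ℚ)
            = asc ((a:ℚ) + m - k) (e+i-a-m-1) * asc (c + m + i - k) (a-i) := by
          rw [hPdef, Polynomial.eval_mul, Polynomial.eval_prod, Polynomial.eval_prod]
          unfold asc
          congr 1 <;>
            · apply Finset.prod_congr rfl
              intro u _
              simp
              ring
        rw [hPeval]
        rw [show (1:ℕ)+k-1 = k from by omega,
          show e+s-(1+k)-m = e+s-m-1-k from by omega,
          show a+m-(1+k) = a+m-1-k from by omega,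
          show e-m+s-1 = e+s-m-1 from by omega,
          show c + (m:ℚ) + i - ((1+k : ℕ):ℚ) + 1 = c + m + i - k from by push_cast; ring,
          show -(e:ℚ) - i + ((1+k : ℕ):ℚ) + 1 = (k:ℚ) + 2 - e - i from by push_cast; ring]
        exact term_eq a m e s i k c hme hea hs1 hsm hi1 hia hcase hkN
      rw [Finset.sum_congr rfl hterm, ← Finset.mul_sum, hsum, mul_zero]
    exact (mul_eq_zero.mp key).resolve_right hMne
end

section
/- Let l be a positive integer. Then det of the l×l matrix with (i,j)-entry (2j-i+2)_i / (2j+1)! for 0 ≤ i,j ≤ l-1 times det of the l×l matrix with (i,j)-entry (2j-i+1)_i / (2j)! for 0 ≤ i,j ≤ l-1, multiplied by 2^l, gives 2^{l²} H(l)²/H(2l) where H is the hyperfactorial; equivalently det_{0≤i,j≤l-1}((2j-i+2)_i) · det_{0≤i,j≤l-1}((2j-i+1)_i) = 2^{l²-l} H(l)² ∏_{j=0}^{l-1}(2j+1)! (2j)! / H(2l). -/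
/-- The hyperfactorial `H(n) = ∏_{k=0}^{n-1} k!`. -/
def hyperfac (n : ℕ) : ℕ := ∏ k ∈ Finset.range n, Nat.factorial k

open Polynomial Finset

private lemma det_asc_eq (l : ℕ) (c : ℚ) :
    Matrix.det (Matrix.of fun i j : Fin l =>
        asc ((2 * j.val : ℕ) - (i.val : ℚ) + c) i.val) =
      Matrix.det (Matrix.vandermonde (fun j : Fin l => ((2 * j.val : ℕ) : ℚ))) := by
  set p : Fin l → ℚ[X] := fun i => ∏ t ∈ range i.val, (X + C (c - i.val + t)) with hp
  have hmonic : ∀ i, (p i).Monic := fun i =>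
    monic_prod_of_monic _ _ (fun t _ => monic_X_add_C _)
  have hdeg : ∀ i : Fin l, (p i).natDegree = i.val := by
    intro i
    rw [hp]
    rw [natDegree_prod _ _ (fun t _ => (monic_X_add_C _).ne_zero)]
    simp only [natDegree_X_add_C, Finset.sum_const, smul_eq_mul, mul_one, card_range]
  have heval : ∀ (i j : Fin l),
      (p j).eval (((2 * i.val : ℕ) : ℚ)) =
        asc ((2 * i.val : ℕ) - (j.val : ℚ) + c) j.val := by
    intro i j
    rw [hp]
    simp only [eval_prod, eval_add, eval_X, eval_C, asc]
    exact Finset.prod_congr rfl (fun t _ => by push_cast; ring)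
  have h := Matrix.det_eval_matrixOfPolynomials_eq_det_vandermonde
      (fun i : Fin l => ((2 * i.val : ℕ) : ℚ)) p hdeg hmonic
  rw [← Matrix.det_transpose (Matrix.of fun i j : Fin l =>
        asc ((2 * j.val : ℕ) - (i.val : ℚ) + c) i.val)]
  rw [h]
  congr 1
  ext i j
  simp only [Matrix.transpose_apply, Matrix.of_apply]
  exact (heval i j).symm

private lemma vand_val (l : ℕ) (hl : 0 < l) :
    Matrix.det (Matrix.vandermonde (fun j : Fin l => ((2 * j.val : ℕ) : ℚ))) =
      2 ^ (∑ i : Fin l, (Finset.Ioi i).card) * (hyperfac l : ℚ) := by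
  obtain ⟨n, rfl⟩ : ∃ n, l = n + 1 := ⟨l - 1, (Nat.succ_pred_eq_of_pos hl).symm⟩
  rw [Matrix.det_vandermonde]
  have h1 : ∀ i : Fin (n + 1),
      ∏ j ∈ Ioi i, (((2 * j.val : ℕ) : ℚ) - ((2 * i.val : ℕ) : ℚ)) =
      2 ^ (Ioi i).card * ∏ j ∈ Ioi i, ((j.val : ℚ) - (i.val : ℚ)) := by
    intro i
    rw [← Finset.prod_const (b := (2 : ℚ)), ← Finset.prod_mul_distrib]
    exact Finset.prod_congr rfl (fun j _ => by push_cast; ring)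
  simp_rw [h1]
  rw [Finset.prod_mul_distrib, Finset.prod_pow_eq_pow_sum]
  congr 1
  have h2 := Matrix.det_vandermonde_id_eq_superFactorial (R := ℚ) n
  rw [Matrix.det_vandermonde] at h2
  rw [h2]
  have h3 : hyperfac (n + 1) = Nat.superFactorial n := by
    rw [hyperfac, Nat.prod_range_succ_factorial]
  rw [h3]

private lemma hyperfac_succ (n : ℕ) : hyperfac (n + 1) = hyperfac n * Nat.factorial n := by
  rw [hyperfac, hyperfac, prod_range_succ]

private lemma hyperfac_two_mul (l : ℕ) :
    hyperfac (2 * l) = ∏ j ∈ range l, (Nat.factorial (2 * j + 1) * Nat.factorial (2 * j)) := by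
  induction l with
  | zero => rfl
  | succ n ih =>
    rw [prod_range_succ, ← ih, show 2 * (n + 1) = (2 * n + 1) + 1 from by ring,
      hyperfac_succ, hyperfac_succ]
    ring

theorem stmt19 (l : ℕ) (hl : 0 < l) :
    Matrix.det (Matrix.of fun i j : Fin l =>
          asc ((2 * j.val : ℕ) - (i.val : ℚ) + 2) i.val) *
      Matrix.det (Matrix.of fun i j : Fin l =>
          asc ((2 * j.val : ℕ) - (i.val : ℚ) + 1) i.val) =
    2 ^ (l ^ 2 - l) * (hyperfac l : ℚ) ^ 2 *
        (∏ j ∈ Finset.range l,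
          ((Nat.factorial (2 * j + 1) : ℚ) * (Nat.factorial (2 * j) : ℚ))) /
      (hyperfac (2 * l) : ℚ) := by
  have hP : (∏ j ∈ Finset.range l,
      ((Nat.factorial (2 * j + 1) : ℚ) * (Nat.factorial (2 * j) : ℚ))) =
      (hyperfac (2 * l) : ℚ) := by
    rw [hyperfac_two_mul]
    push_cast
    rfl
  have hne : (hyperfac (2 * l) : ℚ) ≠ 0 := by
    have : 0 < hyperfac (2 * l) :=
      Finset.prod_pos (fun k _ => Nat.factorial_pos k)
    exact_mod_cast this.ne'
  have hK : (∑ i : Fin l, (Finset.Ioi i).card) + (∑ i : Fin l, (Finset.Ioi i).card)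
      = l ^ 2 - l := by
    have h1 : (∑ i : Fin l, (Finset.Ioi i).card) = ∑ i ∈ range l, i := by
      simp_rw [Fin.card_Ioi]
      rw [Fin.sum_univ_eq_sum_range (fun i => l - 1 - i) l]
      exact Finset.sum_range_reflect (fun i => i) l
    rw [h1, ← two_mul, mul_comm, Finset.sum_range_id_mul_two]
    cases l with
    | zero => rfl
    | succ m =>
      have h2 : (m + 1) ^ 2 = (m + 1) * m + (m + 1) := by ring
      simp only [Nat.add_sub_cancel]
      omega
  rw [det_asc_eq l 2, det_asc_eq l 1, vand_val l hl, hP, mul_div_assoc,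
    div_self hne, mul_one, ← hK, pow_add]
  ring
end
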